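/- arXiv:1404.5057 — 2 statements merged into one kernel-verified Lean document; each statement's English description precedes it below -/
import Mathlib

section
/- Let K be a Fraïssé structure with age 𝒦 and let A, B ∈ 𝒦 with an embedding f : A → B. If S ⊆ Emb(B, K) is thick, then T = {x ∘ f : x ∈ S} ⊆ Emb(A, K) is thick. -/
open FirstOrder CategoryTheory

universe u v

/-- A structure is locally finite if it is the union of an increasing chain of finite
substructures. -/
def IsLocallyFinite (L : FirstOrder.Language.{u, v}) (M : Type) [L.Structure M] : Prop :=
  ∃ A : ℕ → L.Substructure M, Monotone A ∧ (∀ n, ((A n : Set M)).Finite) ∧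
    (⋃ n, ((A n : Set M))) = Set.univ

/-- `M` is ultrahomogeneous: every isomorphism between finite substructures of `M`
extends to an automorphism of `M`. -/
def IsUltrahomog (L : FirstOrder.Language.{u, v}) (M : Type) [L.Structure M] : Prop :=
  ∀ S T : L.Substructure M, (S : Set M).Finite → (T : Set M).Finite →
    ∀ f : S ≃[L] T, ∃ g : M ≃[L] M, ∀ x : S, g x = f x

/-- `S ⊆ Emb(A, M)` is thick: for every finite `B` embeddable in `M` with
`Emb(A, B) ≠ ∅`, there is `g ∈ Emb(B, M)` with `g ∘ Emb(A, B) ⊆ S`. -/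
def Thick (L : FirstOrder.Language.{u, v}) (M : Type) [L.Structure M]
    (A : Bundled.{0} L.Structure) (S : Set (A ↪[L] M)) : Prop :=
  ∀ B : Bundled.{0} L.Structure, Finite B → Nonempty (B ↪[L] M) →
    Nonempty (A ↪[L] B) → ∃ g : B ↪[L] M, ∀ h : A ↪[L] B, g.comp h ∈ S

/-! Let `e : C ↪ K` with `C` finite and `Emb(A, C) ≠ ∅`. By ultrahomogeneity each `e ∘ h`
(`h : A ↪ C`) extends along `f` to some `b h : B ↪ K`. Local finiteness gives a finite
substructure `D ⊆ K` containing `e(C)` and every `b h (B)`; thickness of `S`, applied to `D`,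
gives `g : D ↪ K` with `g ∘ b h ∈ S` for all `h`, and then `g ∘ e` witnesses thickness of the
image, because `(g ∘ b h) ∘ f = g ∘ e ∘ h`. -/

namespace IsUltrahomog

variable {L : FirstOrder.Language.{u, v}} {M : Type} [L.Structure M]

theorem exists_comp_eq (hultra : IsUltrahomog L M) {A B : Type} [L.Structure A]
    [L.Structure B] [Finite A] (u : A ↪[L] M) (w : B ↪[L] M) (f : A ↪[L] B) :
    ∃ v : B ↪[L] M, v.comp f = u := by
  let e : A ↪[L] M := w.comp f
  -- an automorphism `g` extending `u ∘ e⁻¹` between the finite ranges moves `w` to `v := g ∘ w`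
  have range_finite (x : A ↪[L] M) : (x.toHom.range : Set M).Finite := by
    rw [Language.Hom.range_coe]; exact Set.finite_range _
  obtain ⟨g, hg⟩ := hultra _ _ (range_finite e) (range_finite u)
    (u.equivRange.comp e.equivRange.symm)
  refine ⟨g.toEmbedding.comp w, Language.Embedding.ext fun a => ?_⟩
  have hga := hg (e.equivRange a)
  rw [Language.Equiv.comp_apply, Language.Equiv.symm_apply_apply] at hga
  exact hga

end IsUltrahomog

theorem IsLocallyFinite.exists_finite_superset {L : FirstOrder.Language.{u, v}} {M : Type}
    [L.Structure M] (hlf : IsLocallyFinite L M) {s : Set M} (hs : s.Finite) :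
    ∃ D : L.Substructure M, (D : Set M).Finite ∧ s ⊆ D := by
  obtain ⟨D, hmono, hfin, huniv⟩ := hlf
  have hdir : Directed (· ⊆ ·) fun n => (D n : Set M) :=
    (Monotone.directed_le hmono).mono_comp _ fun _ _ => SetLike.coe_subset_coe.2
  obtain ⟨n, hn⟩ := hdir.exists_mem_subset_of_finset_subset_biUnion
    (s := hs.toFinset) (by simp [huniv])
  exact ⟨D n, hfin n, by simpa using hn⟩

theorem Thick.exists_forall_comp_codRestrict_mem {L : FirstOrder.Language.{u, v}} {M : Type}
    [L.Structure M] {B : Bundled.{0} L.Structure} {S : Set (B ↪[L] M)} (hS : Thick L M B S)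
    (D : L.Substructure M) (hD : (D : Set M).Finite) (w : B ↪[L] M) (hw : ∀ b, w b ∈ D) :
    ∃ g : D ↪[L] M, ∀ (v : B ↪[L] M) (hv : ∀ b, v b ∈ D), g.comp (v.codRestrict D hv) ∈ S := by
  obtain ⟨g, hg⟩ := hS ⟨D, inferInstance⟩ hD.to_subtype ⟨D.subtype⟩ ⟨w.codRestrict D hw⟩
  exact ⟨g, fun v hv => hg _⟩

theorem thick_comp_general (L : FirstOrder.Language.{u, v}) (M : Type) [L.Structure M]
    (hlf : IsLocallyFinite L M) (hultra : IsUltrahomog L M)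
    (A B : Bundled.{0} L.Structure) (hA : Finite A) (hB : Finite B)
    (hBM : Nonempty (B ↪[L] M))
    (f : A ↪[L] B) (S : Set (B ↪[L] M)) (hS : Thick L M B S) :
    Thick L M A ((fun x : B ↪[L] M => x.comp f) '' S) := by
  intro C hC ⟨e⟩ ⟨h₀⟩
  obtain ⟨w⟩ := hBM
  choose b hb using fun h : A ↪[L] C => hultra.exists_comp_eq (e.comp h) w f
  have : Finite (A ↪[L] C) := Finite.of_injective _ DFunLike.coe_injective
  obtain ⟨D, hD, hsD⟩ := hlf.exists_finite_superset
    ((Set.finite_range e).union (Set.finite_iUnion fun h => Set.finite_range (b h)))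
  have heD (c : C) : e c ∈ D := hsD (Or.inl ⟨c, rfl⟩)
  have hbD (h : A ↪[L] C) (x : B) : b h x ∈ D := hsD (Or.inr (Set.mem_iUnion.2 ⟨h, x, rfl⟩))
  obtain ⟨g, hg⟩ := hS.exists_forall_comp_codRestrict_mem D hD (b h₀) (hbD h₀)
  refine ⟨g.comp (e.codRestrict D heD), fun h => ⟨_, hg (b h) (hbD h), ?_⟩⟩
  ext a
  simpa using DFunLike.congr_fun (hb h) a

/-- If `K` is a Fraïssé structure, `A`, `B` are in its age, `f : A → B` is an
embedding, and `S ⊆ Emb(B, K)` is thick, then `{x ∘ f : x ∈ S} ⊆ Emb(A, K)` is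
thick. -/
theorem thick_comp (L : FirstOrder.Language.{u, v}) (M : Type) [L.Structure M]
    (hcount : Countable M) (hinf : Infinite M)
    (hlf : IsLocallyFinite L M) (hultra : IsUltrahomog L M)
    (A B : Bundled.{0} L.Structure) (hA : Finite A) (hB : Finite B)
    (hAM : Nonempty (A ↪[L] M)) (hBM : Nonempty (B ↪[L] M))
    (f : A ↪[L] B) (S : Set (B ↪[L] M)) (hS : Thick L M B S) :
    Thick L M A ((fun x : B ↪[L] M => x.comp f) '' S) :=
  thick_comp_general L M hlf hultra A B hA hB hBM f S hS
end

section
/- Let K be a Fraïssé structure with age 𝒦. If B ∈ 𝒦 is a Ramsey object (for embeddings) and A embeds into B, then A is also a Ramsey object. -/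
open FirstOrder CategoryTheory

universe u v

/-- `A` belongs to the age of `M`: `A` is finite and embeds into `M`. -/
def InAge (L : FirstOrder.Language.{u, v}) (M : Type) [L.Structure M]
    (A : Bundled.{0} L.Structure) : Prop :=
  Finite A ∧ Nonempty (A ↪[L] M)

/-- `A` is a Ramsey object (for embeddings) in the age of `M`: for every `B` in the age
embedding `A`, there is `C` in the age such that every 2-coloring of `Emb(A, C)` admits
`f ∈ Emb(B, C)` with `f ∘ Emb(A, B)` monochromatic. -/
def IsRamseyObject (L : FirstOrder.Language.{u, v}) (M : Type) [L.Structure M]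
    (A : Bundled.{0} L.Structure) : Prop :=
  ∀ B : Bundled.{0} L.Structure, InAge L M B → Nonempty (A ↪[L] B) →
    ∃ C : Bundled.{0} L.Structure, InAge L M C ∧ Nonempty (A ↪[L] C) ∧
      ∀ γ : (A ↪[L] C) → Bool, ∃ f : B ↪[L] C,
        ∀ h h' : A ↪[L] B, γ (f.comp h) = γ (f.comp h')

/-- In the age of a Fraïssé structure, if `B` is a Ramsey object and `A` embeds into
`B`, then `A` is a Ramsey object. -/
theorem ramseyObject_of_embedding (L : FirstOrder.Language.{u, v}) (M : Type)
    [L.Structure M]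
    (hcount : Countable M) (hinf : Infinite M)
    (hlf : IsLocallyFinite L M) (hultra : IsUltrahomog L M)
    (A B : Bundled.{0} L.Structure) (hA : InAge L M A) (hB : InAge L M B)
    (hAB : Nonempty (A ↪[L] B)) (hRB : IsRamseyObject L M B) :
    IsRamseyObject L M A := by
  intro B' hB' hAB'
  obtain ⟨e₀⟩ := hAB
  obtain ⟨hAfin, -⟩ := hA
  obtain ⟨hBfin, ⟨ι₀⟩⟩ := hB
  obtain ⟨hB'fin, ⟨ι⟩⟩ := hB'
  haveI := hAfin
  haveI := hBfin
  haveI := hB'fin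
  -- For each embedding h : A ↪ B', extend to a copy of B in M compatible with e₀.
  have key : ∀ h : A ↪[L] B', ∃ k : B ↪[L] M, ∀ x, k (e₀ x) = ι (h x) := by
    intro h
    set f₁ : A ↪[L] M := ι₀.comp e₀ with hf₁
    set f₂ : A ↪[L] M := ι.comp h with hf₂
    have hS : ((f₁.toHom.range : L.Substructure M) : Set M).Finite := by
      apply (Set.finite_range f₁).subset
      rintro x hx
      obtain ⟨y, rfl⟩ := FirstOrder.Language.Hom.mem_range.mp hx
      exact ⟨y, rfl⟩
    have hT : ((f₂.toHom.range : L.Substructure M) : Set M).Finite := by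
      apply (Set.finite_range f₂).subset
      rintro x hx
      obtain ⟨y, rfl⟩ := FirstOrder.Language.Hom.mem_range.mp hx
      exact ⟨y, rfl⟩
    obtain ⟨g, hg⟩ := hultra _ _ hS hT (f₂.equivRange.comp f₁.equivRange.symm)
    refine ⟨g.toEmbedding.comp ι₀, fun x => ?_⟩
    have hx : g (f₁.equivRange x) = f₂.equivRange (f₁.equivRange.symm (f₁.equivRange x)) :=
      hg (f₁.equivRange x)
    simp only [FirstOrder.Language.Equiv.symm_apply_apply] at hx
    have h1 : ((f₁.equivRange x : M)) = f₁ x := f₁.equivRange_apply x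
    have h2 : ((f₂.equivRange x : M)) = f₂ x := f₂.equivRange_apply x
    simp only [FirstOrder.Language.Embedding.comp_apply]
    calc g (ι₀ (e₀ x)) = g (f₁.equivRange x : M) := by rw [h1]; rfl
      _ = (f₂.equivRange x : M) := hx
      _ = ι (h x) := h2
  choose k hk using key
  -- A finite subset of M containing the copy of B' and all the copies of B.
  haveI hembfin : Finite (A ↪[L] B') :=
    Finite.of_injective (fun h => (h : A → B')) DFunLike.coe_injective
  set s : Set M := Set.range ι ∪ ⋃ h : (A ↪[L] B'), Set.range (k h) with hs
  have hsfin : s.Finite :=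
    (Set.finite_range ι).union (Set.finite_iUnion fun h => Set.finite_range (k h))
  obtain ⟨Sub, hmono, hfin, hcover⟩ := hlf
  have hsub : ∃ n, s ⊆ (Sub n : Set M) := by
    have hmem : ∀ x : s, ∃ n, (x : M) ∈ Sub n := by
      intro x
      have : (x : M) ∈ ⋃ n, ((Sub n : Set M)) := by rw [hcover]; exact Set.mem_univ _
      simpa using this
    choose idx hidx using hmem
    haveI := hsfin.to_subtype
    obtain ⟨N, hN⟩ := (Set.finite_range idx).bddAbove
    exact ⟨N, fun x hx => hmono (hN ⟨⟨x, hx⟩, rfl⟩) (hidx ⟨x, hx⟩)⟩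
  obtain ⟨n, hn⟩ := hsub
  set D : Bundled.{0} L.Structure := ⟨↥(Sub n), inferInstance⟩ with hD
  have hDage : InAge L M D := by
    refine ⟨?_, ⟨(Sub n).subtype⟩⟩
    exact (hfin n).to_subtype
  -- restricted embeddings into D
  have hι : ∀ x, ι x ∈ Sub n := fun x => hn (Or.inl ⟨x, rfl⟩)
  have hkh : ∀ (h : A ↪[L] B') (x : B), k h x ∈ Sub n := fun h x =>
    hn (Or.inr (Set.mem_iUnion.mpr ⟨h, ⟨x, rfl⟩⟩))
  set ι' : B' ↪[L] D := FirstOrder.Language.Embedding.codRestrict (Sub n) ι hι with hι'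
  set k' : (A ↪[L] B') → (B ↪[L] D) :=
    fun h => FirstOrder.Language.Embedding.codRestrict (Sub n) (k h) (hkh h) with hk'
  obtain ⟨h₀⟩ := hAB'
  obtain ⟨C, hCage, ⟨jBC⟩, hC⟩ := hRB D hDage ⟨k' h₀⟩
  refine ⟨C, hCage, ⟨jBC.comp e₀⟩, fun δ => ?_⟩
  obtain ⟨f, hf⟩ := hC (fun kk => δ (kk.comp e₀))
  refine ⟨f.comp ι', fun h h' => ?_⟩
  have comm : ∀ h : A ↪[L] B', (f.comp ι').comp h = (f.comp (k' h)).comp e₀ := by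
    intro h
    ext x
    simp only [FirstOrder.Language.Embedding.comp_apply]
    congr 1
    apply Subtype.ext
    show (ι (h x) : M) = (k h (e₀ x) : M)
    exact (hk h x).symm
  calc δ ((f.comp ι').comp h) = δ ((f.comp (k' h)).comp e₀) := by rw [comm h]
    _ = δ ((f.comp (k' h')).comp e₀) := hf (k' h) (k' h')
    _ = δ ((f.comp ι').comp h') := by rw [comm h']
end
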